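/- Let a ∈ [0,1), n ≥ 2, and u ∈ C_c^∞(B) where B ⊂ ℝ^n is the open unit ball. Define ‖u‖_{W^{1,2,a}}² = ∫_B F_a^*(x,∇u(x))² dV_{F_a}(x) + ∫_B u(x)² dV_{F_a}(x) and ‖u‖_{H¹}² = ∫_B h_K^*(x;∇u(x)) dV_{h_K}(x) + ∫_B u(x)² dV_{h_K}(x). Then ((1−a²)^{(n+1)/4}/(1+a)) ‖u‖_{H¹} ≤ ‖u‖_{W^{1,2,a}} ≤ (1/(1−a)) ‖u‖_{H¹}. -/

import Mathlib

open Metric MeasureTheory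

/-- The polar transform (co-metric) of the Funk-type metric `F_a`. -/
noncomputable def FaStar (n : ℕ) (a : ℝ) (x y : EuclideanSpace ℝ (Fin n)) : ℝ :=
  (Real.sqrt ((1 - ‖x‖ ^ 2) * (1 - a ^ 2 * ‖x‖ ^ 2) * ‖y‖ ^ 2 -
      (1 - a ^ 2) * (1 - ‖x‖ ^ 2) * (inner ℝ x y : ℝ) ^ 2) -
    a * (1 - ‖x‖ ^ 2) * (inner ℝ x y : ℝ)) / (1 - a ^ 2 * ‖x‖ ^ 2)

/-- The Klein co-metric `h_K^*(x;y) = (1-|x|²)(|y|² - ⟨x,y⟩²)`. -/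
noncomputable def hKStar (n : ℕ) (x y : EuclideanSpace ℝ (Fin n)) : ℝ :=
  (1 - ‖x‖ ^ 2) * (‖y‖ ^ 2 - (inner ℝ x y : ℝ) ^ 2)

/-- Density of the Finslerian measure `dV_{F_a}` with respect to Lebesgue measure. -/
noncomputable def densFa (n : ℕ) (a : ℝ) (x : EuclideanSpace ℝ (Fin n)) : ℝ :=
  (1 - a ^ 2 * ‖x‖ ^ 2) ^ ((n + 1 : ℝ) / 2) * (1 - ‖x‖ ^ 2) ^ (-((n + 1 : ℝ) / 2))

/-- Density of the Klein measure `dV_{h_K}` with respect to Lebesgue measure. -/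
noncomputable def densK (n : ℕ) (x : EuclideanSpace ℝ (Fin n)) : ℝ :=
  (1 - ‖x‖ ^ 2) ^ (-((n + 1 : ℝ) / 2))

lemma sqrt_ineq (a c h2 b : ℝ) (ha0 : 0 ≤ a) (ha1 : a < 1) (hc0 : 0 < c)
    (h20 : 0 ≤ h2) (hb2 : b ^ 2 ≤ a ^ 2 * h2) (hDle : c * h2 + b ^ 2 ≤ h2)
    (hca : (1 - a) * (1 + a) ≤ c) :
    h2 / (1 + a) ^ 2 ≤ ((Real.sqrt (c * h2 + b ^ 2) - b) / c) ^ 2 ∧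
    ((Real.sqrt (c * h2 + b ^ 2) - b) / c) ^ 2 ≤ h2 / (1 - a) ^ 2 := by
  have hD0 : 0 ≤ c * h2 + b ^ 2 := by positivity
  set h : ℝ := Real.sqrt h2 with hhdef
  set sD : ℝ := Real.sqrt (c * h2 + b ^ 2) with hsDdef
  have hh0 : 0 ≤ h := Real.sqrt_nonneg _
  have hhsq : h ^ 2 = h2 := Real.sq_sqrt h20
  have hsD0 : 0 ≤ sD := Real.sqrt_nonneg _
  have hsDsq : sD ^ 2 = c * h2 + b ^ 2 := Real.sq_sqrt hD0
  have hsD_le : sD ≤ h := Real.sqrt_le_sqrt hDle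
  have hb_le : |b| ≤ a * h := by
    have h1 : b ^ 2 ≤ (a * h) ^ 2 := by rw [mul_pow, hhsq]; exact hb2
    calc |b| = Real.sqrt (b ^ 2) := (Real.sqrt_sq_eq_abs b).symm
    _ ≤ Real.sqrt ((a * h) ^ 2) := Real.sqrt_le_sqrt h1
    _ = a * h := Real.sqrt_sq (by positivity)
  have hb_sD : |b| ≤ sD := by
    have h1 : b ^ 2 ≤ c * h2 + b ^ 2 := by nlinarith [mul_nonneg hc0.le h20]
    calc |b| = Real.sqrt (b ^ 2) := (Real.sqrt_sq_eq_abs b).symm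
    _ ≤ sD := Real.sqrt_le_sqrt h1
  have habs1 : b ≤ a * h := (le_abs_self b).trans hb_le
  have habs2 : -(a * h) ≤ b := by have := neg_abs_le b; linarith
  have hN0 : 0 ≤ sD - b := by have := (le_abs_self b).trans hb_sD; linarith
  have hNS : (sD - b) * (sD + b) = c * h2 := by
    have h1 : (sD - b) * (sD + b) = sD ^ 2 - b ^ 2 := by ring
    rw [h1, hsDsq]; ring
  have hS_le : sD + b ≤ (1 + a) * h := by nlinarith [hsD_le, habs1]
  have hN_le : sD - b ≤ (1 + a) * h := by nlinarith [hsD_le, habs2]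
  constructor
  · rw [div_pow, div_le_div_iff₀ (by positivity) (by positivity)]
    rcases eq_or_lt_of_le h20 with h2z | h2p
    · rw [← h2z]; nlinarith [sq_nonneg ((sD - b) * (1 + a))]
    · have key : c * h2 ≤ (sD - b) * ((1 + a) * h) := by
        calc c * h2 = (sD - b) * (sD + b) := hNS.symm
        _ ≤ (sD - b) * ((1 + a) * h) := mul_le_mul_of_nonneg_left hS_le hN0
      have key2 : (c * h2) ^ 2 ≤ ((sD - b) * ((1 + a) * h)) ^ 2 :=
        pow_le_pow_left₀ (by positivity) key 2
      have key3 : (c * h2) ^ 2 ≤ (sD - b) ^ 2 * (1 + a) ^ 2 * h2 := by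
        calc (c * h2) ^ 2 ≤ ((sD - b) * ((1 + a) * h)) ^ 2 := key2
        _ = (sD - b) ^ 2 * (1 + a) ^ 2 * h ^ 2 := by ring
        _ = (sD - b) ^ 2 * (1 + a) ^ 2 * h2 := by rw [hhsq]
      nlinarith [key3, h2p]
  · rw [div_pow, div_le_div_iff₀ (by positivity) (pow_pos (by linarith : (0:ℝ) < 1 - a) 2)]
    have hN2 : (sD - b) ^ 2 ≤ (1 + a) ^ 2 * h2 := by
      calc (sD - b) ^ 2 ≤ ((1 + a) * h) ^ 2 := pow_le_pow_left₀ hN0 hN_le 2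
      _ = (1 + a) ^ 2 * h ^ 2 := by ring
      _ = (1 + a) ^ 2 * h2 := by rw [hhsq]
    have hc2 : ((1 - a) * (1 + a)) ^ 2 ≤ c ^ 2 := pow_le_pow_left₀ (by nlinarith) hca 2
    have e1 : (sD - b) ^ 2 * (1 - a) ^ 2 ≤ (1 + a) ^ 2 * h2 * (1 - a) ^ 2 :=
      mul_le_mul_of_nonneg_right hN2 (sq_nonneg (1 - a))
    have e2 : h2 * ((1 - a) * (1 + a)) ^ 2 ≤ h2 * c ^ 2 := mul_le_mul_of_nonneg_left hc2 h20
    have e3 : (1 + a) ^ 2 * h2 * (1 - a) ^ 2 = h2 * ((1 - a) * (1 + a)) ^ 2 := by ring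
    linarith

lemma hKStar_nonneg (n : ℕ) (x y : EuclideanSpace ℝ (Fin n)) (hx : ‖x‖ < 1) :
    0 ≤ hKStar n x y := by
  have hcs := real_inner_mul_inner_self_le x y
  rw [real_inner_self_eq_norm_sq, real_inner_self_eq_norm_sq] at hcs
  have h1 : ‖x‖ ^ 2 < 1 := by nlinarith [norm_nonneg x]
  have hy : (0:ℝ) ≤ ‖y‖ ^ 2 := by positivity
  have hcs' : (inner ℝ x y : ℝ) ^ 2 ≤ ‖x‖ ^ 2 * ‖y‖ ^ 2 := by nlinarith [hcs]
  have h2 : (inner ℝ x y : ℝ) ^ 2 ≤ ‖y‖ ^ 2 := hcs'.trans (by nlinarith)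
  unfold hKStar
  have := mul_nonneg (by linarith : (0:ℝ) ≤ 1 - ‖x‖ ^ 2)
    (by linarith : (0:ℝ) ≤ ‖y‖ ^ 2 - (inner ℝ x y : ℝ) ^ 2)
  linarith

lemma key_pt (n : ℕ) (a : ℝ) (ha0 : 0 ≤ a) (ha1 : a < 1)
    (x y : EuclideanSpace ℝ (Fin n)) (hx : ‖x‖ < 1) :
    hKStar n x y / (1 + a) ^ 2 ≤ FaStar n a x y ^ 2 ∧
      FaStar n a x y ^ 2 ≤ hKStar n x y / (1 - a) ^ 2 := by
  have hcs : (inner ℝ x y : ℝ) * (inner ℝ x y : ℝ) ≤ ‖x‖ ^ 2 * ‖y‖ ^ 2 := by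
    have h := real_inner_mul_inner_self_le x y
    rwa [real_inner_self_eq_norm_sq, real_inner_self_eq_norm_sq] at h
  have hcs' : (inner ℝ x y : ℝ) ^ 2 ≤ ‖x‖ ^ 2 * ‖y‖ ^ 2 := by nlinarith [hcs]
  have hr2 : ‖x‖ ^ 2 < 1 := by nlinarith [norm_nonneg x]
  have hr20 : (0:ℝ) ≤ ‖x‖ ^ 2 := by positivity
  have hY : (0:ℝ) ≤ ‖y‖ ^ 2 := by positivity
  set r2 := ‖x‖ ^ 2 with hr2def
  set Y := ‖y‖ ^ 2 with hYdef
  set t : ℝ := (inner ℝ x y : ℝ) with htdef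
  have h1r : (0:ℝ) ≤ 1 - r2 := by linarith
  have hc0 : (0:ℝ) < 1 - a ^ 2 * r2 := by nlinarith [sq_nonneg a]
  have h20 : (0:ℝ) ≤ (1 - r2) * (Y - t ^ 2) := by
    have h2 : t ^ 2 ≤ Y := hcs'.trans (by nlinarith)
    exact mul_nonneg h1r (by linarith)
  have A1 : a ^ 2 * (1 - r2) ^ 2 * t ^ 2 ≤ a ^ 2 * (1 - r2) ^ 2 * (r2 * Y) :=
    mul_le_mul_of_nonneg_left hcs' (by positivity)
  have A2 : a ^ 2 * r2 * (1 - r2) * t ^ 2 ≤ a ^ 2 * r2 * (1 - r2) * (r2 * Y) :=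
    mul_le_mul_of_nonneg_left hcs' (by positivity)
  have A3 : a ^ 2 * (1 - r2) * t ^ 2 ≤ a ^ 2 * (1 - r2) * (r2 * Y) :=
    mul_le_mul_of_nonneg_left hcs' (by positivity)
  have B : (0:ℝ) ≤ a ^ 2 * Y * (1 - r2) ^ 3 := by positivity
  have hb2 : (a * (1 - r2) * t) ^ 2 ≤ a ^ 2 * ((1 - r2) * (Y - t ^ 2)) := by nlinarith [A1, A3, B]
  have hDle : (1 - a ^ 2 * r2) * ((1 - r2) * (Y - t ^ 2)) + (a * (1 - r2) * t) ^ 2 ≤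
      (1 - r2) * (Y - t ^ 2) := by nlinarith [A1, A2]
  have hca : (1 - a) * (1 + a) ≤ 1 - a ^ 2 * r2 := by nlinarith [sq_nonneg a]
  have hre : (1 - r2) * (1 - a ^ 2 * r2) * Y - (1 - a ^ 2) * (1 - r2) * t ^ 2 =
      (1 - a ^ 2 * r2) * ((1 - r2) * (Y - t ^ 2)) + (a * (1 - r2) * t) ^ 2 := by ring
  have := sqrt_ineq a (1 - a ^ 2 * r2) ((1 - r2) * (Y - t ^ 2)) (a * (1 - r2) * t)
    ha0 ha1 hc0 h20 hb2 hDle hca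
  unfold FaStar hKStar
  rw [← hr2def, ← hYdef, ← htdef, hre]
  exact this

lemma dens_bounds (n : ℕ) (a : ℝ) (ha0 : 0 ≤ a) (ha1 : a < 1)
    (x : EuclideanSpace ℝ (Fin n)) (hx : ‖x‖ < 1) :
    0 ≤ densK n x ∧
    (1 - a ^ 2) ^ ((n + 1 : ℝ) / 2) * densK n x ≤ densFa n a x ∧
    densFa n a x ≤ densK n x := by
  have hr2 : ‖x‖ ^ 2 < 1 := by nlinarith [norm_nonneg x]
  have hr20 : (0:ℝ) ≤ ‖x‖ ^ 2 := by positivity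
  have hb : (0:ℝ) < 1 - ‖x‖ ^ 2 := by linarith
  have hK0 : 0 ≤ densK n x := Real.rpow_nonneg hb.le _
  have ha2 : (0:ℝ) ≤ 1 - a ^ 2 := by nlinarith
  have hA1 : (1:ℝ) - a ^ 2 ≤ 1 - a ^ 2 * ‖x‖ ^ 2 := by nlinarith [sq_nonneg a]
  have hA2 : (1:ℝ) - a ^ 2 * ‖x‖ ^ 2 ≤ 1 := by nlinarith [sq_nonneg a]
  have hp : (0:ℝ) ≤ (n + 1 : ℝ) / 2 := by positivity
  refine ⟨hK0, ?_, ?_⟩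
  · unfold densFa densK
    exact mul_le_mul_of_nonneg_right (Real.rpow_le_rpow ha2 hA1 hp) hK0
  · unfold densFa densK
    calc (1 - a ^ 2 * ‖x‖ ^ 2) ^ ((n + 1 : ℝ) / 2) * (1 - ‖x‖ ^ 2) ^ (-((n + 1 : ℝ) / 2))
        ≤ 1 * (1 - ‖x‖ ^ 2) ^ (-((n + 1 : ℝ) / 2)) := by
          apply mul_le_mul_of_nonneg_right _ hK0
          calc (1 - a ^ 2 * ‖x‖ ^ 2) ^ ((n + 1 : ℝ) / 2) ≤ 1 ^ ((n + 1 : ℝ) / 2) :=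
            Real.rpow_le_rpow (le_trans ha2 hA1) hA2 hp
          _ = 1 := Real.one_rpow _
    _ = (1 - ‖x‖ ^ 2) ^ (-((n + 1 : ℝ) / 2)) := one_mul _

lemma integrable_aux {n : ℕ} {u f : EuclideanSpace ℝ (Fin n) → ℝ}
    (hcs : HasCompactSupport u)
    (hsupp : tsupport u ⊆ ball (0 : EuclideanSpace ℝ (Fin n)) 1)
    (hf : ContinuousOn f (ball (0 : EuclideanSpace ℝ (Fin n)) 1))
    (hf0 : ∀ x, x ∉ tsupport u → f x = 0) :
    IntegrableOn f (ball (0 : EuclideanSpace ℝ (Fin n)) 1) := by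
  have hc : Continuous f := by
    rw [continuous_iff_continuousAt]
    intro x
    by_cases hx : x ∈ ball (0 : EuclideanSpace ℝ (Fin n)) 1
    · exact hf.continuousAt (isOpen_ball.mem_nhds hx)
    · have hx' : x ∉ tsupport u := fun h => hx (hsupp h)
      have hev : f =ᶠ[nhds x] fun _ => (0:ℝ) := by
        filter_upwards [(isClosed_tsupport u).isOpen_compl.mem_nhds hx'] with y hy
        exact hf0 y hy
      exact hev.continuousAt
  have hfc : HasCompactSupport f := hcs.mono' (Function.support_subset_iff'.2 hf0)
  exact (hc.integrable_of_hasCompactSupport hfc).integrableOn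

theorem stmt_6 (n : ℕ) (hn : 2 ≤ n) (a : ℝ) (ha : a ∈ Set.Ico (0 : ℝ) 1)
    (u : EuclideanSpace ℝ (Fin n) → ℝ) (hu : ContDiff ℝ (⊤ : ℕ∞) u)
    (hcs : HasCompactSupport u) (hsupp : tsupport u ⊆ ball (0 : EuclideanSpace ℝ (Fin n)) 1) :
    (1 - a ^ 2) ^ ((n + 1 : ℝ) / 4) / (1 + a) *
      Real.sqrt ((∫ x in ball (0 : EuclideanSpace ℝ (Fin n)) 1,
          hKStar n x (gradient u x) * densK n x) +
        ∫ x in ball (0 : EuclideanSpace ℝ (Fin n)) 1, u x ^ 2 * densK n x) ≤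
      Real.sqrt ((∫ x in ball (0 : EuclideanSpace ℝ (Fin n)) 1,
          (FaStar n a x (gradient u x)) ^ 2 * densFa n a x) +
        ∫ x in ball (0 : EuclideanSpace ℝ (Fin n)) 1, u x ^ 2 * densFa n a x) ∧
    Real.sqrt ((∫ x in ball (0 : EuclideanSpace ℝ (Fin n)) 1,
          (FaStar n a x (gradient u x)) ^ 2 * densFa n a x) +
        ∫ x in ball (0 : EuclideanSpace ℝ (Fin n)) 1, u x ^ 2 * densFa n a x) ≤
      (1 / (1 - a)) *
      Real.sqrt ((∫ x in ball (0 : EuclideanSpace ℝ (Fin n)) 1,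
          hKStar n x (gradient u x) * densK n x) +
        ∫ x in ball (0 : EuclideanSpace ℝ (Fin n)) 1, u x ^ 2 * densK n x) := by
  obtain ⟨ha0, ha1⟩ := ha
  have ha2' : (0:ℝ) ≤ 1 - a ^ 2 := by nlinarith
  -- continuity of the gradient
  have hgc : Continuous (gradient u) := by
    have h1 : Continuous (fderiv ℝ u) := hu.continuous_fderiv (by simp)
    exact (InnerProductSpace.toDual ℝ (EuclideanSpace ℝ (Fin n))).symm.continuous.comp h1
  have hgrad0 : ∀ x, x ∉ tsupport u → gradient u x = 0 := by
    intro x hx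
    have hns : x ∉ Function.support (fderiv ℝ u) := fun h => hx (support_fderiv_subset ℝ h)
    have h0 : fderiv ℝ u x = 0 := Function.notMem_support.1 hns
    unfold gradient
    rw [h0]; simp
  -- continuity of densities on the ball
  have hcont_nsq : Continuous fun x : EuclideanSpace ℝ (Fin n) => 1 - ‖x‖ ^ 2 :=
    continuous_const.sub (continuous_norm.pow 2)
  have hball_pos : ∀ x ∈ ball (0 : EuclideanSpace ℝ (Fin n)) 1, (0:ℝ) < 1 - ‖x‖ ^ 2 := by
    intro x hx
    have : ‖x‖ < 1 := by simpa [mem_ball_zero_iff] using hx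
    nlinarith [norm_nonneg x]
  have hdKc : ContinuousOn (densK n) (ball (0 : EuclideanSpace ℝ (Fin n)) 1) := by
    intro x hx
    exact (hcont_nsq.continuousAt.rpow_const
      (Or.inl (ne_of_gt (hball_pos x hx)))).continuousWithinAt
  have hdFc : ContinuousOn (densFa n a) (ball (0 : EuclideanSpace ℝ (Fin n)) 1) := by
    intro x hx
    apply ContinuousAt.continuousWithinAt
    apply ContinuousAt.mul
    · exact (continuous_const.sub (continuous_const.mul (continuous_norm.pow 2))).continuousAt.rpow_const
        (Or.inr (by positivity))
    · exact hcont_nsq.continuousAt.rpow_const (Or.inl (ne_of_gt (hball_pos x hx)))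
  -- continuity of co-metric integrand pieces
  have hKg_cont : Continuous fun x => hKStar n x (gradient u x) := by
    unfold hKStar
    exact hcont_nsq.mul (((hgc.norm.pow 2)).sub ((continuous_id.inner hgc).pow 2))
  have hFa_contOn : ContinuousOn (fun x => FaStar n a x (gradient u x))
      (ball (0 : EuclideanSpace ℝ (Fin n)) 1) := by
    unfold FaStar
    apply ContinuousOn.div
    · apply Continuous.continuousOn
      apply Continuous.sub
      · apply Real.continuous_sqrt.comp
        exact ((hcont_nsq.mul (continuous_const.sub (continuous_const.mul (continuous_norm.pow 2)))).mul
            (hgc.norm.pow 2)).sub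
          ((continuous_const.mul hcont_nsq).mul ((continuous_id.inner hgc).pow 2))
      · exact (continuous_const.mul hcont_nsq).mul (continuous_id.inner hgc)
    · exact (continuous_const.sub (continuous_const.mul (continuous_norm.pow 2))).continuousOn
    · intro x hx
      have h1 : ‖x‖ < 1 := by simpa [mem_ball_zero_iff] using hx
      have : (0:ℝ) < 1 - a ^ 2 * ‖x‖ ^ 2 := by nlinarith [sq_nonneg a, norm_nonneg x, sq_nonneg (a * ‖x‖)]
      exact ne_of_gt this
  -- integrability of the four integrands
  have hInt_g1 : IntegrableOn (fun x => hKStar n x (gradient u x) * densK n x)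
      (ball (0 : EuclideanSpace ℝ (Fin n)) 1) :=
    integrable_aux hcs hsupp (hKg_cont.continuousOn.mul hdKc)
      (fun x hx => by rw [hgrad0 x hx]; simp [hKStar])
  have hInt_g2 : IntegrableOn (fun x => u x ^ 2 * densK n x)
      (ball (0 : EuclideanSpace ℝ (Fin n)) 1) :=
    integrable_aux hcs hsupp ((hu.continuous.pow 2).continuousOn.mul hdKc)
      (fun x hx => by rw [image_eq_zero_of_notMem_tsupport hx]; simp)
  have hInt_f1 : IntegrableOn (fun x => (FaStar n a x (gradient u x)) ^ 2 * densFa n a x)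
      (ball (0 : EuclideanSpace ℝ (Fin n)) 1) :=
    integrable_aux hcs hsupp ((hFa_contOn.pow 2).mul hdFc)
      (fun x hx => by rw [hgrad0 x hx]; simp [FaStar])
  have hInt_f2 : IntegrableOn (fun x => u x ^ 2 * densFa n a x)
      (ball (0 : EuclideanSpace ℝ (Fin n)) 1) :=
    integrable_aux hcs hsupp ((hu.continuous.pow 2).continuousOn.mul hdFc)
      (fun x hx => by rw [image_eq_zero_of_notMem_tsupport hx]; simp)
  set C2 : ℝ := (1 - a ^ 2) ^ ((n + 1 : ℝ) / 2) / (1 + a) ^ 2 with hC2def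
  have hK0 : (0:ℝ) ≤ (1 - a ^ 2) ^ ((n + 1 : ℝ) / 2) := Real.rpow_nonneg ha2' _
  -- pointwise bounds on the ball
  have hP1 : ∀ x ∈ ball (0 : EuclideanSpace ℝ (Fin n)) 1,
      C2 * (hKStar n x (gradient u x) * densK n x) ≤
        (FaStar n a x (gradient u x)) ^ 2 * densFa n a x := by
    intro x hx
    have hxn : ‖x‖ < 1 := by simpa [mem_ball_zero_iff] using hx
    obtain ⟨hdK0, hdlow, hdup⟩ := dens_bounds n a ha0 ha1 x hxn
    have hkey := (key_pt n a ha0 ha1 x (gradient u x) hxn).1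
    have hhK0 := hKStar_nonneg n x (gradient u x) hxn
    calc C2 * (hKStar n x (gradient u x) * densK n x)
        = (hKStar n x (gradient u x) / (1 + a) ^ 2) *
          ((1 - a ^ 2) ^ ((n + 1 : ℝ) / 2) * densK n x) := by rw [hC2def]; ring
    _ ≤ (FaStar n a x (gradient u x)) ^ 2 * densFa n a x :=
        mul_le_mul hkey hdlow (mul_nonneg hK0 hdK0) (sq_nonneg _)
  have hP2 : ∀ x ∈ ball (0 : EuclideanSpace ℝ (Fin n)) 1,
      C2 * (u x ^ 2 * densK n x) ≤ u x ^ 2 * densFa n a x := by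
    intro x hx
    have hxn : ‖x‖ < 1 := by simpa [mem_ball_zero_iff] using hx
    obtain ⟨hdK0, hdlow, hdup⟩ := dens_bounds n a ha0 ha1 x hxn
    have hC2K : C2 ≤ (1 - a ^ 2) ^ ((n + 1 : ℝ) / 2) := by
      rw [hC2def]
      exact div_le_self hK0 (by nlinarith)
    calc C2 * (u x ^ 2 * densK n x) = u x ^ 2 * (C2 * densK n x) := by ring
    _ ≤ u x ^ 2 * densFa n a x := by
        apply mul_le_mul_of_nonneg_left _ (sq_nonneg _)
        exact le_trans (mul_le_mul_of_nonneg_right hC2K hdK0) hdlow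
  have hP3 : ∀ x ∈ ball (0 : EuclideanSpace ℝ (Fin n)) 1,
      (FaStar n a x (gradient u x)) ^ 2 * densFa n a x ≤
        (1 / (1 - a)) ^ 2 * (hKStar n x (gradient u x) * densK n x) := by
    intro x hx
    have hxn : ‖x‖ < 1 := by simpa [mem_ball_zero_iff] using hx
    obtain ⟨hdK0, hdlow, hdup⟩ := dens_bounds n a ha0 ha1 x hxn
    have hkey := (key_pt n a ha0 ha1 x (gradient u x) hxn).2
    have hhK0 := hKStar_nonneg n x (gradient u x) hxn
    have hdF0 : 0 ≤ densFa n a x := le_trans (mul_nonneg hK0 hdK0) hdlow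
    calc (FaStar n a x (gradient u x)) ^ 2 * densFa n a x
        ≤ (hKStar n x (gradient u x) / (1 - a) ^ 2) * densK n x :=
          mul_le_mul hkey hdup hdF0 (by positivity)
    _ = (1 / (1 - a)) ^ 2 * (hKStar n x (gradient u x) * densK n x) := by
        have hne : (1:ℝ) - a ≠ 0 := by linarith
        field_simp
  have hP4 : ∀ x ∈ ball (0 : EuclideanSpace ℝ (Fin n)) 1,
      u x ^ 2 * densFa n a x ≤ (1 / (1 - a)) ^ 2 * (u x ^ 2 * densK n x) := by
    intro x hx
    have hxn : ‖x‖ < 1 := by simpa [mem_ball_zero_iff] using hx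
    obtain ⟨hdK0, hdlow, hdup⟩ := dens_bounds n a ha0 ha1 x hxn
    have hM1 : (1:ℝ) ≤ (1 / (1 - a)) ^ 2 := by
      rw [div_pow, one_pow, le_div_iff₀ (pow_pos (by linarith : (0:ℝ) < 1 - a) 2)]
      nlinarith
    calc u x ^ 2 * densFa n a x ≤ u x ^ 2 * densK n x :=
          mul_le_mul_of_nonneg_left hdup (sq_nonneg _)
    _ = 1 * (u x ^ 2 * densK n x) := (one_mul _).symm
    _ ≤ (1 / (1 - a)) ^ 2 * (u x ^ 2 * densK n x) :=
          mul_le_mul_of_nonneg_right hM1 (mul_nonneg (sq_nonneg _) hdK0)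
  -- integral comparisons
  have hi1 := setIntegral_mono_on (hInt_g1.const_mul C2) hInt_f1 measurableSet_ball hP1
  have hi2 := setIntegral_mono_on (hInt_g2.const_mul C2) hInt_f2 measurableSet_ball hP2
  have hi3 := setIntegral_mono_on hInt_f1 (hInt_g1.const_mul ((1 / (1 - a)) ^ 2))
    measurableSet_ball hP3
  have hi4 := setIntegral_mono_on hInt_f2 (hInt_g2.const_mul ((1 / (1 - a)) ^ 2))
    measurableSet_ball hP4
  rw [integral_const_mul] at hi1 hi2 hi3 hi4
  set IHg : ℝ := ∫ x in ball (0 : EuclideanSpace ℝ (Fin n)) 1,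
    hKStar n x (gradient u x) * densK n x
  set IHu : ℝ := ∫ x in ball (0 : EuclideanSpace ℝ (Fin n)) 1, u x ^ 2 * densK n x
  set IFg : ℝ := ∫ x in ball (0 : EuclideanSpace ℝ (Fin n)) 1,
    (FaStar n a x (gradient u x)) ^ 2 * densFa n a x
  set IFu : ℝ := ∫ x in ball (0 : EuclideanSpace ℝ (Fin n)) 1, u x ^ 2 * densFa n a x
  have hlow : C2 * (IHg + IHu) ≤ IFg + IFu := by rw [mul_add]; exact add_le_add hi1 hi2
  have hup : IFg + IFu ≤ (1 / (1 - a)) ^ 2 * (IHg + IHu) := by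
    rw [mul_add]; exact add_le_add hi3 hi4
  have hC0 : (0:ℝ) ≤ (1 - a ^ 2) ^ ((n + 1 : ℝ) / 4) / (1 + a) :=
    div_nonneg (Real.rpow_nonneg ha2' _) (by linarith)
  have hCsq : ((1 - a ^ 2) ^ ((n + 1 : ℝ) / 4) / (1 + a)) ^ 2 = C2 := by
    rw [hC2def, div_pow]
    congr 1
    rw [← Real.rpow_natCast ((1 - a ^ 2) ^ ((n + 1 : ℝ) / 4)) 2, ← Real.rpow_mul ha2']
    norm_num
    ring_nf
  constructor
  · calc (1 - a ^ 2) ^ ((n + 1 : ℝ) / 4) / (1 + a) * Real.sqrt (IHg + IHu)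
        = Real.sqrt (((1 - a ^ 2) ^ ((n + 1 : ℝ) / 4) / (1 + a)) ^ 2 * (IHg + IHu)) := by
          rw [Real.sqrt_mul (sq_nonneg _), Real.sqrt_sq hC0]
    _ ≤ Real.sqrt (IFg + IFu) := Real.sqrt_le_sqrt (by rw [hCsq]; exact hlow)
  · calc Real.sqrt (IFg + IFu) ≤ Real.sqrt ((1 / (1 - a)) ^ 2 * (IHg + IHu)) :=
          Real.sqrt_le_sqrt hup
    _ = (1 / (1 - a)) * Real.sqrt (IHg + IHu) := by
        rw [Real.sqrt_mul (sq_nonneg _), Real.sqrt_sq (div_nonneg zero_le_one (by linarith))]
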